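/- For n×n real positive definite symmetric matrices W and Q, the identity (Q^{1/2} W Q^{1/2})^{1/2} = Q^{1/2} W^{1/2} (W^{1/2} Q W^{1/2})^{-1/2} W^{1/2} Q^{1/2} holds. -/

import Mathlib

open Matrix

section

open scoped ComplexOrder

/-- The positive semidefinite square root of a positive semidefinite matrix
(the definition `Matrix.PosSemidef.sqrt` of Mathlib of December 2024, since removed). -/
noncomputable def Matrix.PosSemidef.sqrt {n 𝕜 : Type*} [Fintype n] [RCLike 𝕜] [DecidableEq n]
    {A : Matrix n n 𝕜} (hA : A.PosSemidef) : Matrix n n 𝕜 :=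
  hA.1.eigenvectorUnitary.1 * diagonal ((↑) ∘ (√·) ∘ hA.1.eigenvalues) *
    (star hA.1.eigenvectorUnitary : Matrix n n 𝕜)

end

/-
The right-hand side is `X S⁻¹ Xᴴ` with `X = Q^{1/2} W^{1/2}` and `S = (W^{1/2} Q W^{1/2})^{1/2}`,
hence positive semidefinite. Since `S² = Xᴴ X`, its square is `X S⁻¹ (Xᴴ X) S⁻¹ Xᴴ = X Xᴴ = Q^{1/2} W Q^{1/2}`,
so it is the positive semidefinite square root of `Q^{1/2} W Q^{1/2}` by uniqueness.
-/

lemma mul_mul_mul_self_of_mul_self_eq {M : Type*} [Monoid M] {x y s t : M}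
    (hts : t * s = 1) (hst : s * t = 1) (h : s * s = y * x) :
    x * t * y * (x * t * y) = x * y := by
  calc x * t * y * (x * t * y) = x * (t * s * (s * t)) * y := by
        rw [mul_assoc t s, ← mul_assoc s s, h]; simp only [mul_assoc]
    _ = x * y := by rw [hts, hst, one_mul, mul_one]

namespace Matrix.PosSemidef

open scoped MatrixOrder ComplexOrder

variable {n 𝕜 : Type*} [Fintype n] [DecidableEq n] [RCLike 𝕜] {A : Matrix n n 𝕜}

lemma sqrt_eq_cfcSqrt (hA : A.PosSemidef) : hA.sqrt = CFC.sqrt A := by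
  rw [CFC.sqrt_eq_real_sqrt A hA.nonneg, cfcₙ_eq_cfc, hA.1.cfc_eq]
  simp [IsHermitian.cfc, PosSemidef.sqrt]

lemma sqrt_mul_self (hA : A.PosSemidef) : hA.sqrt * hA.sqrt = A := by
  rw [hA.sqrt_eq_cfcSqrt]
  exact CFC.sqrt_mul_sqrt_self A hA.nonneg

lemma posSemidef_sqrt (hA : A.PosSemidef) : hA.sqrt.PosSemidef := by
  rw [hA.sqrt_eq_cfcSqrt]
  exact (CFC.sqrt_nonneg A).posSemidef

lemma sqrt_eq_of_mul_self_eq {B : Matrix n n 𝕜} (hA : A.PosSemidef) (hB : B.PosSemidef)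
    (h : B * B = A) : hA.sqrt = B := by
  rw [hA.sqrt_eq_cfcSqrt]
  exact CFC.sqrt_unique h hB.nonneg

end Matrix.PosSemidef

/-- For n×n real positive definite symmetric matrices `W` and `Q`,
`(Q^{1/2} W Q^{1/2})^{1/2} = Q^{1/2} W^{1/2} (W^{1/2} Q W^{1/2})^{-1/2} W^{1/2} Q^{1/2}`. -/
theorem stmt1 {n : ℕ} (W Q : Matrix (Fin n) (Fin n) ℝ)
    (hW : W.PosDef) (hQ : Q.PosDef)
    (h1 : (hQ.posSemidef.sqrt * W * hQ.posSemidef.sqrt).PosSemidef)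
    (h2 : (hW.posSemidef.sqrt * Q * hW.posSemidef.sqrt).PosSemidef) :
    h1.sqrt =
      hQ.posSemidef.sqrt * hW.posSemidef.sqrt * h2.sqrt⁻¹ *
        hW.posSemidef.sqrt * hQ.posSemidef.sqrt := by
  set q := hQ.posSemidef.sqrt
  set w := hW.posSemidef.sqrt
  set S := h2.sqrt
  have hq : q.PosSemidef := hQ.posSemidef.posSemidef_sqrt
  have hw : w.PosSemidef := hW.posSemidef.posSemidef_sqrt
  have hw_unit : IsUnit w := isUnit_of_mul_isUnit_left (hW.posSemidef.sqrt_mul_self ▸ hW.isUnit)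
  have hS_unit : IsUnit S.det := (isUnit_iff_isUnit_det S).mp <|
    isUnit_of_mul_isUnit_left (h2.sqrt_mul_self ▸ (hw_unit.mul hQ.isUnit).mul hw_unit)
  have hS_sq : S * S = w * q * (q * w) := by
    rw [h2.sqrt_mul_self, mul_assoc w q, ← mul_assoc q, hQ.posSemidef.sqrt_mul_self, mul_assoc]
  refine h1.sqrt_eq_of_mul_self_eq ?_ ?_
  · have hqw : (q * w)ᴴ = w * q := by
      rw [conjTranspose_mul, hq.isHermitian.eq, hw.isHermitian.eq]
    simpa only [hqw, mul_assoc] using h2.posSemidef_sqrt.inv.mul_mul_conjTranspose_same (q * w)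
  · have hsq := mul_mul_mul_self_of_mul_self_eq (nonsing_inv_mul S hS_unit)
      (mul_nonsing_inv S hS_unit) hS_sq
    calc _ = q * w * (w * q) := by simpa only [mul_assoc] using hsq
      _ = q * W * q := by
        rw [← mul_assoc (q * w) w q, mul_assoc q w w, hW.posSemidef.sqrt_mul_self]
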